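/- Let (H, ⇀, ↼) be a matched pair of actions on a Hopf algebra H. Then for all x, y ∈ H, S(x ↼ y) = S(x₁) ↼ (x₂ ⇀ y). -/

import Mathlib

open TensorProduct Coalgebra HopfAlgebra LinearMap

noncomputable section

variable (k H : Type*) [CommRing k] [Ring H] [HopfAlgebra k H]

/-- `f` is a left `H`-module coalgebra action of the Hopf algebra `H` on itself. -/
structure IsLeftModCoalgAction (f : H ⊗[k] H →ₗ[k] H) : Prop where
  one_act : ∀ a : H, f (1 ⊗ₜ a) = a
  mul_act : ∀ x y a : H, f ((x * y) ⊗ₜ a) = f (x ⊗ₜ f (y ⊗ₜ a))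
  counit_act : ∀ x a : H, counit (R := k) (f (x ⊗ₜ a)) = counit (R := k) x * counit (R := k) a
  comul_act : ∀ (x a : H) {ι κ : Type*} (rx : Coalgebra.Repr k x ι) (ra : Coalgebra.Repr k a κ),
      comul (R := k) (f (x ⊗ₜ a)) =
        ∑ i ∈ rx.index, ∑ j ∈ ra.index,
          f (rx.left i ⊗ₜ ra.left j) ⊗ₜ[k] f (rx.right i ⊗ₜ ra.right j)

/-- `g` is a right `H`-module coalgebra action of the Hopf algebra `H` on itself. -/
structure IsRightModCoalgAction (g : H ⊗[k] H →ₗ[k] H) : Prop where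
  act_one : ∀ x : H, g (x ⊗ₜ 1) = x
  act_mul : ∀ x a b : H, g (x ⊗ₜ (a * b)) = g (g (x ⊗ₜ a) ⊗ₜ b)
  counit_act : ∀ x a : H, counit (R := k) (g (x ⊗ₜ a)) = counit (R := k) x * counit (R := k) a
  comul_act : ∀ (x a : H) {ι κ : Type*} (rx : Coalgebra.Repr k x ι) (ra : Coalgebra.Repr k a κ),
      comul (R := k) (g (x ⊗ₜ a)) =
        ∑ i ∈ rx.index, ∑ j ∈ ra.index,
          g (rx.left i ⊗ₜ ra.left j) ⊗ₜ[k] g (rx.right i ⊗ₜ ra.right j)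

universe ul1 ul2 ur1 ur2

/-- `(H, f, g)` (written `(H, ⇀, ↼)`) is a matched pair of actions on the Hopf algebra `H`:
`f` is a left module coalgebra action, `g` a right module coalgebra action, satisfying the
matched pair conditions (MP1)–(MP5) and the extra condition `xy = (x₁ ⇀ y₁)(x₂ ↼ y₂)`. -/
structure IsMatchedPairOfActions (f g : H ⊗[k] H →ₗ[k] H) : Prop where
  left_action : IsLeftModCoalgAction.{_, _, ul1, ul2} k H f
  right_action : IsRightModCoalgAction.{_, _, ur1, ur2} k H g
  mp1 : ∀ (x a b : H) {ι κ : Type*} (rx : Coalgebra.Repr k x ι) (ra : Coalgebra.Repr k a κ),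
      f (x ⊗ₜ (a * b)) =
        ∑ i ∈ rx.index, ∑ j ∈ ra.index,
          f (rx.left i ⊗ₜ ra.left j) * f (g (rx.right i ⊗ₜ ra.right j) ⊗ₜ b)
  mp2 : ∀ x : H, f (x ⊗ₜ 1) = counit (R := k) x • (1 : H)
  mp3 : ∀ (x y a : H) {ι κ : Type*} (ry : Coalgebra.Repr k y ι) (ra : Coalgebra.Repr k a κ),
      g ((x * y) ⊗ₜ a) =
        ∑ i ∈ ry.index, ∑ j ∈ ra.index,
          g (x ⊗ₜ f (ry.left i ⊗ₜ ra.left j)) * g (ry.right i ⊗ₜ ra.right j)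
  mp4 : ∀ a : H, g ((1 : H) ⊗ₜ a) = counit (R := k) a • (1 : H)
  mp5 : ∀ (x a : H) {ι κ : Type*} (rx : Coalgebra.Repr k x ι) (ra : Coalgebra.Repr k a κ),
      (∑ i ∈ rx.index, ∑ j ∈ ra.index,
        f (rx.left i ⊗ₜ ra.left j) ⊗ₜ[k] g (rx.right i ⊗ₜ ra.right j)) =
      ∑ i ∈ rx.index, ∑ j ∈ ra.index,
        f (rx.right i ⊗ₜ ra.right j) ⊗ₜ[k] g (rx.left i ⊗ₜ ra.left j)
  mp_mul : ∀ (x y : H) {ι κ : Type*} (rx : Coalgebra.Repr k x ι) (ry : Coalgebra.Repr k y κ),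
      x * y = ∑ i ∈ rx.index, ∑ j ∈ ry.index,
        f (rx.left i ⊗ₜ ry.left j) * g (rx.right i ⊗ₜ ry.right j)

/-- The braiding operator `r(x ⊗ y) = (x₁ ⇀ y₁) ⊗ (x₂ ↼ y₂)` associated to the pair `(f, g)`. -/
def braidOp (f g : H ⊗[k] H →ₗ[k] H) : H ⊗[k] H →ₗ[k] H ⊗[k] H :=
  TensorProduct.map f g ∘ₗ (tensorTensorTensorComm k H H H H).toLinearMap
    ∘ₗ TensorProduct.map (comul (R := k)) (comul (R := k))


/-!
In the convolution algebra of linear maps `H ⊗ H → H`, the right action `↼` is a coalgebra map,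
so `S ∘ ↼` is a right convolution inverse of `↼`. Conditions (MP3) and (MP4) show that
`x ⊗ y ↦ S(x₁) ↼ (x₂ ⇀ y)` is a left convolution inverse of `↼`, and left and right inverses
in a monoid agree.
-/

open WithConv

section Coalgebra

universe u

variable {R A C : Type*} [CommSemiring R]

/-- A representation indexed by a type of an arbitrary universe, as needed to instantiate
hypotheses that quantify over representations with index types of fixed universes. -/
def Coalgebra.Repr.uliftFin [AddCommMonoid C] [Module R C] [CoalgebraStruct R C] {a : C}
    {ι : Type*} (r : Coalgebra.Repr R a ι) :
    Coalgebra.Repr R a (ULift.{u} (Fin r.index.card)) where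
  index := Finset.univ
  left i := r.left (r.index.equivFin.symm i.down)
  right i := r.right (r.index.equivFin.symm i.down)
  eq := by
    rw [← r.eq, ← Finset.sum_coe_sort r.index, ← r.index.equivFin.symm.sum_comp,
      ← Equiv.ulift.symm.sum_comp]
    rfl

theorem Coalgebra.sum_apply_tmul_tmul_eq {M : Type*} [AddCommMonoid A] [Module R A]
    [Coalgebra R A] [AddCommMonoid M] [Module R M]
    (Φ : A ⊗[R] (A ⊗[R] A) →ₗ[R] M) {a : A} {ι : Type*} {κ Λ : ι → Type*}
    (r : Coalgebra.Repr R a ι) (a₁ : ∀ i, Coalgebra.Repr R (r.left i) (κ i))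
    (a₂ : ∀ i, Coalgebra.Repr R (r.right i) (Λ i)) :
    ∑ i ∈ r.index, ∑ j ∈ (a₁ i).index, Φ ((a₁ i).left j ⊗ₜ ((a₁ i).right j ⊗ₜ r.right i)) =
      ∑ i ∈ r.index, ∑ j ∈ (a₂ i).index, Φ (r.left i ⊗ₜ ((a₂ i).left j ⊗ₜ (a₂ i).right j)) := by
  simpa only [map_sum] using congr(Φ $(Coalgebra.sum_tmul_tmul_eq r a₁ a₂))

theorem LinearMap.convMul_antipode_comp_coalgHom [Semiring A] [HopfAlgebra R A]
    [AddCommMonoid C] [Module R C] [Coalgebra R C] (φ : C →ₗc[R] A) :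
    toConv (φ : C →ₗ[R] A) * toConv (antipode R ∘ₗ (φ : C →ₗ[R] A)) = 1 := by
  have h := convMul_comp_coalgHom_distrib (toConv LinearMap.id) (toConv (antipode R)) φ
  rw [id_mul_antipode] at h
  ext c
  simpa using (LinearMap.congr_fun h c).symm

end Coalgebra

section RightAction

universe u v

variable {k H} {g : H ⊗[k] H →ₗ[k] H}

theorem IsRightModCoalgAction.counit_comp (hg : IsRightModCoalgAction.{_, _, u, v} k H g) :
    counit ∘ₗ g = counit := by
  ext x a
  simp [hg.counit_act, mul_comm]

theorem IsRightModCoalgAction.map_comp_comul (hg : IsRightModCoalgAction.{_, _, u, v} k H g) :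
    TensorProduct.map g g ∘ₗ comul = comul ∘ₗ g := by
  refine TensorProduct.ext' fun x a => ?_
  let rx : Coalgebra.Repr k x (ULift.{u} (Fin _)) := (ℛ k x).uliftFin
  let ra : Coalgebra.Repr k a (ULift.{v} (Fin _)) := (ℛ k a).uliftFin
  rw [LinearMap.comp_apply, LinearMap.comp_apply, hg.comul_act x a rx ra, ← (rx.tmul ra).eq,
    map_sum, Coalgebra.Repr.tmul_index, Finset.sum_product]
  rfl

def IsRightModCoalgAction.toCoalgHom (hg : IsRightModCoalgAction.{_, _, u, v} k H g) :
    H ⊗[k] H →ₗc[k] H :=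
  { g with counit_comp := hg.counit_comp, map_comp_comul := hg.map_comp_comul }

end RightAction

section MatchedPair

variable {k H} {f g : H ⊗[k] H →ₗ[k] H}

/-- The map `x ⊗ y ↦ S(x₁) ↼ (x₂ ⇀ y)`. -/
def antipodeTwist (f g : H ⊗[k] H →ₗ[k] H) : H ⊗[k] H →ₗ[k] H :=
  g ∘ₗ TensorProduct.map (antipode k) f ∘ₗ (TensorProduct.assoc k H H H).toLinearMap
    ∘ₗ (comul (R := k) (A := H)).rTensor H

theorem antipodeTwist_tmul (x y : H) {ι : Type*} (r : Coalgebra.Repr k x ι) :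
    antipodeTwist f g (x ⊗ₜ y) =
      ∑ i ∈ r.index, g (antipode k (r.left i) ⊗ₜ f (r.right i ⊗ₜ y)) := by
  simp [antipodeTwist, ← r.eq, sum_tmul]

theorem IsMatchedPairOfActions.mul_act_eq_convMul (h : IsMatchedPairOfActions k H f g)
    (s y a : H) :
    g ((s * y) ⊗ₜ a) = (toConv (g ∘ₗ TensorProduct.mk k H H s ∘ₗ f) * toConv g) (y ⊗ₜ a) := by
  rw [h.mp3 s y a (ℛ k y).uliftFin (ℛ k a).uliftFin,
    ((ℛ k y).uliftFin.tmul (ℛ k a).uliftFin).convMul_apply, Coalgebra.Repr.tmul_index,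
    Finset.sum_product]
  rfl

theorem IsMatchedPairOfActions.antipodeTwist_convMul (h : IsMatchedPairOfActions k H f g) :
    toConv (antipodeTwist f g) * toConv g = 1 := by
  refine WithConv.ext (TensorProduct.ext' fun a b => ?_)
  let ra := ℛ k a
  let rb := ℛ k b
  let ρ i := ℛ k (ra.left i)
  let ρ' i := ℛ k (ra.right i)
  calc (toConv (antipodeTwist f g) * toConv g) (a ⊗ₜ b)
      = ∑ j ∈ rb.index, ∑ i ∈ ra.index, ∑ l ∈ (ρ i).index,
          g (antipode k ((ρ i).left l) ⊗ₜ f ((ρ i).right l ⊗ₜ rb.left j)) *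
            g (ra.right i ⊗ₜ rb.right j) := by
        rw [(ra.tmul rb).convMul_apply, Coalgebra.Repr.tmul_index, Finset.sum_product,
          Finset.sum_comm]
        simp only [Coalgebra.Repr.tmul_left, Coalgebra.Repr.tmul_right,
          antipodeTwist_tmul _ _ (ρ _), Finset.sum_mul]
    _ = ∑ j ∈ rb.index, ∑ i ∈ ra.index, ∑ l ∈ (ρ' i).index,
          g (antipode k (ra.left i) ⊗ₜ f ((ρ' i).left l ⊗ₜ rb.left j)) *
            g ((ρ' i).right l ⊗ₜ rb.right j) := by
        refine Finset.sum_congr rfl fun j _ => ?_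
        simpa using Coalgebra.sum_apply_tmul_tmul_eq (LinearMap.mul' k H ∘ₗ
          TensorProduct.map
            (g ∘ₗ TensorProduct.map (antipode k) (f ∘ₗ (TensorProduct.mk k H H).flip (rb.left j)))
            (g ∘ₗ (TensorProduct.mk k H H).flip (rb.right j)) ∘ₗ
          (TensorProduct.assoc k H H H).symm.toLinearMap) ra ρ ρ'
    _ = ∑ i ∈ ra.index, g ((antipode k (ra.left i) * ra.right i) ⊗ₜ b) := by
        rw [Finset.sum_comm]
        refine Finset.sum_congr rfl fun i _ => ?_
        rw [h.mul_act_eq_convMul, ((ρ' i).tmul rb).convMul_apply, Coalgebra.Repr.tmul_index,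
          Finset.sum_product, Finset.sum_comm]
        rfl
    _ = g ((counit a • 1) ⊗ₜ b) := by
        rw [← HopfAlgebra.sum_antipode_mul_eq_smul ra, sum_tmul, map_sum]
    _ = (1 : WithConv (H ⊗[k] H →ₗ[k] H)) (a ⊗ₜ b) := by
        rw [← smul_tmul', map_smul, h.mp4, LinearMap.convOne_apply, counit_tmul,
          Algebra.algebraMap_eq_smul_one, smul_smul, smul_eq_mul, mul_comm]

theorem IsMatchedPairOfActions.antipode_comp_eq_antipodeTwist (h : IsMatchedPairOfActions k H f g) :
    antipode k ∘ₗ g = antipodeTwist f g :=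
  toConv_injective <| (left_inv_eq_right_inv h.antipodeTwist_convMul
    (convMul_antipode_comp_coalgHom h.right_action.toCoalgHom)).symm

end MatchedPair

/-- For a matched pair of actions `(H, ⇀, ↼)` on a Hopf algebra `H`,
`S(x ↼ y) = S(x₁) ↼ (x₂ ⇀ y)`. -/
theorem stmt1 (f g : H ⊗[k] H →ₗ[k] H) (h : IsMatchedPairOfActions k H f g)
    (x y : H) {ι : Type*} (rx : Coalgebra.Repr k x ι) :
    antipode (R := k) (g (x ⊗ₜ y)) =
      ∑ i ∈ rx.index, g (antipode (R := k) (rx.left i) ⊗ₜ f (rx.right i ⊗ₜ y)) := by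
  rw [← antipodeTwist_tmul x y rx, ← h.antipode_comp_eq_antipodeTwist]
  rfl

end
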